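/- Let $\nu$ be a lattice path with height vector $\mathbf{h}(\nu)$, and suppose $1 \leq k \leq n$, $f_{k-1} < i < f_k$, and $h_i(\nu)+1 \leq m \leq n$. Define $\mathfrak{b}^{i,m}$ by $\mathfrak{b}^{i,m}_r = m$ if $f_{k-1}+1 \leq r \leq i$ and $\mathfrak{b}^{i,m}_r = h_r(\nu)$ otherwise. Then $\mathfrak{b}^{i,m}$ is a $\nu$-bracket vector whose unique descent is at position $i$ (i.e., $i$ is the only index $j$ with $\mathfrak{b}^{i,m}_j > \mathfrak{b}^{i,m}_{j+1}$). -/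

import Mathlib

/-! Heights are weakly increasing and `f_j` is the last position of height `j`, so every position
strictly between `f_{k-1}` and `f_k` has height exactly `k`. Raising the block
`f_{k-1} < r ≤ i` to a value `m > k` therefore keeps the vector below `m` to the left of the
block and at least `k` to its right. This rules out a `121`-pattern, keeps every `f_j` outside
the block, and creates a descent only where the block ends, at `i`. -/

/-- `b` is a `ν`-bracket vector. -/
def IsBracketVec (ℓ n : ℕ) (h : Fin (ℓ + 1) → ℕ) (f : Fin (n + 1) → Fin (ℓ + 1))
    (b : Fin (ℓ + 1) → ℕ) : Prop :=
  (∀ k : Fin (n + 1), b (f k) = (k : ℕ)) ∧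
  (∀ i : Fin (ℓ + 1), h i ≤ b i ∧ b i ≤ n) ∧
  ∀ i1 i2 i3 : Fin (ℓ + 1), i1 < i2 → i2 < i3 → b i1 = b i3 → ¬ b i1 < b i2

def Avoids121 {α : Type*} [LinearOrder α] (b : α → ℕ) : Prop :=
  ∀ i1 i2 i3 : α, i1 < i2 → i2 < i3 → b i1 = b i3 → ¬ b i1 < b i2

def raiseBlock {α : Type*} [LinearOrder α] (h : α → ℕ) (a i : α) (m : ℕ) : α → ℕ :=
  fun r => if a < r ∧ r ≤ i then m else h r

section raiseBlock

variable {α : Type*} [LinearOrder α] {h : α → ℕ} {a i r s : α} {m : ℕ}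

theorem raiseBlock_of_mem (har : a < r) (hri : r ≤ i) : raiseBlock h a i m r = m :=
  if_pos ⟨har, hri⟩

theorem raiseBlock_of_le (hra : r ≤ a) : raiseBlock h a i m r = h r :=
  if_neg fun hr => (hra.trans_lt hr.1).false

theorem raiseBlock_of_lt (hir : i < r) : raiseBlock h a i m r = h r :=
  if_neg fun hr => (hr.2.trans_lt hir).false

theorem le_raiseBlock (hblock : ∀ r, a < r → r ≤ i → h r ≤ m) (r : α) :
    h r ≤ raiseBlock h a i m r := by
  unfold raiseBlock
  split_ifs with hr
  exacts [hblock r hr.1 hr.2, le_rfl]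

theorem raiseBlock_le {n : ℕ} (hm : m ≤ n) (hh : h r ≤ n) : raiseBlock h a i m r ≤ n := by
  unfold raiseBlock
  split_ifs <;> assumption

theorem le_raiseBlock_of_le (hmono : Monotone h) (hbelow : ∀ r ≤ a, h r < m) (hra : r ≤ a)
    (hrs : r ≤ s) : h r ≤ raiseBlock h a i m s := by
  unfold raiseBlock
  split_ifs
  exacts [(hbelow r hra).le, hmono hrs]

theorem avoids121_raiseBlock (hmono : Monotone h) {c : ℕ} (hbelow : ∀ r ≤ a, h r < c)
    (habove : ∀ s, i < s → c ≤ h s) (hcm : c ≤ m) : Avoids121 (raiseBlock h a i m) := by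
  have hbelow_m (r) (hra : r ≤ a) : h r < m := (hbelow r hra).trans_le hcm
  intro i1 i2 i3 h12 h23 heq hlt
  rcases le_or_gt i2 a with h2a | ha2
  · rw [raiseBlock_of_le h2a, raiseBlock_of_le (h12.le.trans h2a)] at hlt
    rw [raiseBlock_of_le (h12.le.trans h2a)] at heq
    exact (hlt.trans_le (le_raiseBlock_of_le hmono hbelow_m h2a h23.le)).ne heq
  rcases lt_or_ge i i2 with hi2 | h2i
  · rw [heq, raiseBlock_of_lt hi2, raiseBlock_of_lt (hi2.trans h23)] at hlt
    exact (hmono h23.le).not_gt hlt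
  rw [raiseBlock_of_mem ha2 h2i] at hlt
  have h1a : i1 ≤ a := by
    by_contra! ha1
    rw [raiseBlock_of_mem ha1 (h12.le.trans h2i)] at hlt
    exact hlt.false
  rw [raiseBlock_of_le h1a] at heq
  rcases lt_or_ge i i3 with hi3 | h3i
  · rw [raiseBlock_of_lt hi3] at heq
    exact (hbelow i1 h1a).not_ge (heq ▸ habove i3 hi3)
  · rw [raiseBlock_of_mem (ha2.trans h23) h3i] at heq
    exact (hbelow_m i1 h1a).ne heq

theorem le_and_lt_of_raiseBlock_lt (hmono : Monotone h) (hbelow : ∀ r ≤ a, h r < m)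
    (hrs : r < s) (hdesc : raiseBlock h a i m s < raiseBlock h a i m r) : r ≤ i ∧ i < s := by
  rcases lt_or_ge i r with hir | hri
  · rw [raiseBlock_of_lt hir, raiseBlock_of_lt (hir.trans hrs)] at hdesc
    exact absurd (hmono hrs.le) hdesc.not_ge
  refine ⟨hri, lt_of_not_ge fun hsi => ?_⟩
  rcases le_or_gt r a with hra | har
  · rw [raiseBlock_of_le hra] at hdesc
    exact (le_raiseBlock_of_le hmono hbelow hra hrs.le).not_gt hdesc
  · rw [raiseBlock_of_mem har hri, raiseBlock_of_mem (har.trans hrs) hsi] at hdesc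
    exact hdesc.false

end raiseBlock

theorem Fin.raiseBlock_succ_lt_castSucc_iff {ℓ : ℕ} {h : Fin (ℓ + 1) → ℕ} {a i : Fin (ℓ + 1)}
    {m : ℕ} (hmono : Monotone h) (hbelow : ∀ r ≤ a, h r < m) (hai : a < i)
    (hnext : ∀ j : Fin ℓ, j.castSucc = i → h j.succ < m) (j : Fin ℓ) :
    raiseBlock h a i m j.succ < raiseBlock h a i m j.castSucc ↔ j.castSucc = i := by
  constructor
  · intro hdesc
    obtain ⟨hji, hij⟩ := le_and_lt_of_raiseBlock_lt hmono hbelow (castSucc_lt_succ (i := j)) hdesc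
    exact le_antisymm hji (le_castSucc_iff.mpr hij)
  · rintro rfl
    rw [raiseBlock_of_mem hai le_rfl, raiseBlock_of_lt (castSucc_lt_succ (i := j))]
    exact hnext j rfl

theorem Fin.monotone_of_succ_eq_or_eq_succ {ℓ : ℕ} {h : Fin (ℓ + 1) → ℕ}
    (hstep : ∀ i : Fin ℓ, h i.succ = h i.castSucc ∨ h i.succ = h i.castSucc + 1) : Monotone h :=
  monotone_iff_le_succ.mpr fun j => by rcases hstep j with e | e <;> omega

theorem Monotone.lt_of_isGreatest_lt {α β : Type*} [Preorder α] [PartialOrder β] {h : α → β}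
    (hmono : Monotone h) {c : β} {p r : α} (hp : IsGreatest {x | h x = c} p) (hpr : p < r) :
    c < h r :=
  (hp.1 ▸ hmono hpr.le).lt_of_ne fun hc => hpr.not_ge (hp.2 hc.symm)

/-- With `1 ≤ k ≤ n`, `f_{k-1} < i < f_k`, and `h_i + 1 ≤ m ≤ n`,
the vector `𝔟^{i,m}` (equal to `m` on positions `f_{k-1}+1, …, i` and to the height
vector elsewhere) is a `ν`-bracket vector whose unique descent is at position `i`. -/
theorem stmt_15 (ℓ n : ℕ) (h : Fin (ℓ + 1) → ℕ) (f : Fin (n + 1) → Fin (ℓ + 1))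
    (hlast : h (Fin.last ℓ) = n)
    (hstep : ∀ i : Fin ℓ, h i.succ = h i.castSucc ∨ h i.succ = h i.castSucc + 1)
    (hf : ∀ k : Fin (n + 1), h (f k) = (k : ℕ) ∧ ∀ i : Fin (ℓ + 1), h i = (k : ℕ) → i ≤ f k)
    (k : ℕ) (hk1 : 1 ≤ k) (hk2 : k ≤ n)
    (i : Fin (ℓ + 1))
    (hi1 : f ⟨k - 1, by omega⟩ < i) (hi2 : i < f ⟨k, by omega⟩)
    (m : ℕ) (hm1 : h i + 1 ≤ m) (hm2 : m ≤ n)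
    (B : Fin (ℓ + 1) → ℕ)
    (hB : B = fun r => if f ⟨k - 1, by omega⟩ < r ∧ r ≤ i then m else h r) :
    IsBracketVec ℓ n h f B ∧
      ∀ j : Fin ℓ, B j.succ < B j.castSucc ↔ j.castSucc = i := by
  set a := f ⟨k - 1, by omega⟩
  set b := f ⟨k, by omega⟩
  have ha : h a = k - 1 := (hf _).1
  have hb : h b = k := (hf _).1
  have hmono : Monotone h := Fin.monotone_of_succ_eq_or_eq_succ hstep
  have hbelow (r) (hra : r ≤ a) : h r < k := by
    have := ha ▸ hmono hra
    omega
  have habove (r) (har : a < r) : k ≤ h r := by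
    have : k - 1 < h r := hmono.lt_of_isGreatest_lt (hf ⟨k - 1, by omega⟩) har
    omega
  have hupto (r) (hrb : r ≤ b) : h r ≤ k := hb ▸ hmono hrb
  have hm : k < m := (habove i hi1).trans_lt hm1
  have hblock (r) (har : a < r) (hri : r ≤ i) : h r = k :=
    (hupto r (hri.trans hi2.le)).antisymm (habove r har)
  obtain rfl : B = raiseBlock h a i m := hB
  have hfix (j : Fin (n + 1)) : raiseBlock h a i m (f j) = j := by
    refine (if_neg fun hj => ?_).trans (hf j).1
    have hjk : (j : ℕ) = k := (hf j).1 ▸ hblock _ hj.1 hj.2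
    exact (hj.2.trans_lt hi2).ne (congrArg f (Fin.ext hjk))
  have hbounds (r) : h r ≤ raiseBlock h a i m r ∧ raiseBlock h a i m r ≤ n :=
    ⟨le_raiseBlock (fun r har hri => (hblock r har hri).le.trans hm.le) r,
      raiseBlock_le hm2 (hlast ▸ hmono (Fin.le_last r))⟩
  have hnext (j : Fin ℓ) (hj : j.castSucc = i) : h j.succ < m :=
    (hupto _ (Fin.castSucc_lt_iff_succ_le.mp (hj ▸ hi2))).trans_lt hm
  have h121 := avoids121_raiseBlock hmono hbelow (fun s his => habove s (hi1.trans his)) hm.le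
  exact ⟨⟨hfix, hbounds, h121⟩,
    Fin.raiseBlock_succ_lt_castSucc_iff hmono (fun r hra => (hbelow r hra).trans hm) hi1 hnext⟩
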